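/- arXiv:2407.21505 — 5 statements merged into one kernel-verified Lean document; each statement's English description precedes it below -/
import Mathlib

section
/- Let F_m(s) denote the value C₁ of the continued fraction recursion C_{m+1} = 0, C_i(s) = (s γ̂_i + (γ_i + C_{i+1}(s))^{-1})^{-1}, built from symmetric positive definite p×p matrices γ₁,…,γ_m, γ̂₁,…,γ̂_m. Then for fixed s > 0 the sequence m ↦ F_m(s) is strictly increasing in the Loewner order: F_{m-1}(s) < F_m(s). -/
/-!
Inversion is strictly antitone on positive definite matrices: if `A > 0` and `E = B - A > 0`,
then `A⁻¹ - B⁻¹ = B⁻¹ (E + E A⁻¹ E) B⁻¹ > 0`. Hence each floor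
`X ↦ (s γ̂ᵢ + (γᵢ + X)⁻¹)⁻¹` of the continued fraction is strictly monotone on positive
semidefinite matrices, being a composition of two inversions, and `F_{m+1} > F_m` follows by
induction on the depth, the base case being `(s γ̂ᵢ + γᵢ⁻¹)⁻¹ > 0`.
-/

open Matrix
open scoped ComplexOrder

namespace Matrix.PosDef

variable {n 𝕜 : Type*} [Fintype n] [DecidableEq n] [RCLike 𝕜]

theorem inv_sub_inv {A B : Matrix n n 𝕜} (hA : A.PosDef) (hBA : (B - A).PosDef) :
    (A⁻¹ - B⁻¹).PosDef := by
  set E := B - A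
  have hBE : B = A + E := by simp [E]
  have hB : B.PosDef := hBE ▸ hA.add hBA
  have hAdet := (isUnit_iff_isUnit_det A).mp hA.isUnit
  have hBdet := (isUnit_iff_isUnit_det B).mp hB.isUnit
  have hAA : A * A⁻¹ = 1 := mul_nonsing_inv A hAdet
  have hAA' : A⁻¹ * A = 1 := nonsing_inv_mul A hAdet
  have hBB : B * B⁻¹ = 1 := mul_nonsing_inv B hBdet
  have hBB' : B⁻¹ * B = 1 := nonsing_inv_mul B hBdet
  have hmid : (E + Eᴴ * A⁻¹ * E).PosDef :=
    hBA.add_posSemidef (hA.inv.posSemidef.conjTranspose_mul_mul_same E)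
  have hEA : E + E * A⁻¹ * E = B * A⁻¹ * B - B := by
    calc E + E * A⁻¹ * E
        = (A * A⁻¹) * A + (A * A⁻¹) * E + E * (A⁻¹ * A) + E * A⁻¹ * E - A - E := by
          rw [hAA, hAA']; noncomm_ring
      _ = B * A⁻¹ * B - B := by rw [hBE]; noncomm_ring
  have hcongr : B⁻¹ᴴ * (E + Eᴴ * A⁻¹ * E) * B⁻¹ = A⁻¹ - B⁻¹ := by
    rw [hB.1.inv.eq, hBA.1.eq, hEA]
    calc B⁻¹ * (B * A⁻¹ * B - B) * B⁻¹
        = (B⁻¹ * B) * A⁻¹ * (B * B⁻¹) - (B⁻¹ * B) * B⁻¹ := by noncomm_ring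
      _ = A⁻¹ - B⁻¹ := by rw [hBB, hBB']; noncomm_ring
  rw [← hcongr]
  exact hmid.conjTranspose_mul_mul_same (mulVec_injective_iff_isUnit.mpr hB.inv.isUnit)

theorem inv_add_inv_add_sub_inv_add_inv_add {G H X Y : Matrix n n 𝕜} (hG : G.PosDef)
    (hH : H.PosDef) (hX : X.PosSemidef) (hXY : (Y - X).PosDef) :
    ((H + (G + Y)⁻¹)⁻¹ - (H + (G + X)⁻¹)⁻¹).PosDef := by
  have hGX : (G + X).PosDef := hG.add_posSemidef hX
  have hGY : (G + Y).PosDef := by simpa using hGX.add hXY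
  have hinv : ((G + X)⁻¹ - (G + Y)⁻¹).PosDef :=
    hGX.inv_sub_inv (by simpa [add_sub_add_left_eq_sub] using hXY)
  exact (hH.add hGY.inv).inv_sub_inv (by simpa [add_sub_add_left_eq_sub] using hinv)

end Matrix.PosDef

/-- `cfrac s γ γh i k` is the matrix continued fraction `C_i(s)` with `k` floors remaining:
`C_i = (s γ̂_i + (γ_i + C_{i+1})⁻¹)⁻¹`, terminated with the zero matrix (`k = 0`).
The Gauss approximation of depth `m` is `F_m(s) = cfrac s γ γh 1 m`. -/
noncomputable def cfrac {p : ℕ} (s : ℝ) (γ γh : ℕ → Matrix (Fin p) (Fin p) ℝ) :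
    ℕ → ℕ → Matrix (Fin p) (Fin p) ℝ
  | _, 0 => 0
  | i, k + 1 => (s • γh i + (γ i + cfrac s γ γh (i + 1) k)⁻¹)⁻¹

section cfrac

variable {p : ℕ} {s : ℝ} {γ γh : ℕ → Matrix (Fin p) (Fin p) ℝ}

theorem cfrac_posSemidef (hγ : ∀ i, (γ i).PosDef) (hγh : ∀ i, (γh i).PosDef) (hs : 0 < s)
    (i k : ℕ) : (cfrac s γ γh i k).PosSemidef := by
  induction k generalizing i with
  | zero => exact .zero
  | succ k ih =>
    exact (((hγh i).smul hs).add ((hγ i).add_posSemidef (ih (i + 1))).inv).inv.posSemidef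

theorem cfrac_succ_sub_cfrac_posDef (hγ : ∀ i, (γ i).PosDef) (hγh : ∀ i, (γh i).PosDef)
    (hs : 0 < s) (i k : ℕ) : (cfrac s γ γh i (k + 1) - cfrac s γ γh i k).PosDef := by
  induction k generalizing i with
  | zero => simpa [cfrac] using (((hγh i).smul hs).add (hγ i).inv).inv
  | succ k ih =>
    exact PosDef.inv_add_inv_add_sub_inv_add_inv_add (hγ i) ((hγh i).smul hs)
      (cfrac_posSemidef hγ hγh hs (i + 1) k) (ih (i + 1))

end cfrac

/-- For fixed `s > 0`, the sequence of Gauss continued fractions `m ↦ F_m(s)` is strictly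
increasing in the Loewner order: `F_{m-1}(s) < F_m(s)`. -/
theorem stmt_6 (p : ℕ) (γ γh : ℕ → Matrix (Fin p) (Fin p) ℝ)
    (hγ : ∀ i, (γ i).PosDef) (hγh : ∀ i, (γh i).PosDef) (s : ℝ) (hs : 0 < s) :
    ∀ m : ℕ, (cfrac s γ γh 1 (m + 1) - cfrac s γ γh 1 m).PosDef :=
  fun m => cfrac_succ_sub_cfrac_posDef hγ hγh hs 1 m
end

section
/- Let F̃_m(s) denote the value C₁ of the continued fraction recursion terminated with C_m(s) = (s γ̂_m)^{-1} (i.e., the last floor γ_m is omitted), with C_i(s) = (s γ̂_i + (γ_i + C_{i+1}(s))^{-1})^{-1} for i < m, built from symmetric positive definite p×p matrices. Then for fixed s > 0 the sequence m ↦ F̃_m(s) is strictly decreasing in the Loewner order: F̃_m(s) < F̃_{m-1}(s). -/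
/-! Each floor `X ↦ (s γ̂ + (γ + X)⁻¹)⁻¹` is a composition of two strictly antitone inversions,
hence strictly monotone in the Loewner order. The base case `F̃_1 > F̃_2` holds because
`F̃_2⁻¹ = F̃_1⁻¹ + (positive definite)`, and an induction on the depth, run from the inner floors
outwards, propagates the strict inequality. -/

open Matrix

/-- `cfracR s γ γh i k` is the Gauss-Radau matrix continued fraction `C_i(s)` with `k` floors
remaining: `C_i = (s γ̂_i + (γ_i + C_{i+1})⁻¹)⁻¹` for `k ≥ 2`, terminated with the last floor
`(s γ̂)⁻¹` (the last `γ` is omitted, i.e. `C_{m+1} = +∞`).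
The Gauss-Radau approximation of depth `m ≥ 1` is `F̃_m(s) = cfracR s γ γh 1 m`. -/
noncomputable def cfracR {p : ℕ} (s : ℝ) (γ γh : ℕ → Matrix (Fin p) (Fin p) ℝ) :
    ℕ → ℕ → Matrix (Fin p) (Fin p) ℝ
  | _, 0 => 0
  | i, 1 => (s • γh i)⁻¹
  | i, k + 2 => (s • γh i + (γ i + cfracR s γ γh (i + 1) (k + 1))⁻¹)⁻¹

open scoped ComplexOrder in
theorem Matrix.PosDef.inv_sub_inv_s7 {n 𝕜 : Type*} [Fintype n] [DecidableEq n] [RCLike 𝕜]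
    {A B : Matrix n n 𝕜} (hA : A.PosDef) (hBA : (B - A).PosDef) : (A⁻¹ - B⁻¹).PosDef := by
  have hB : B.PosDef := by simpa using hA.add hBA
  have key : A⁻¹ - B⁻¹ = B⁻¹ᴴ * ((B - A)ᴴ * A⁻¹ * (B - A) + (B - A)) * B⁻¹ := by
    rw [hB.inv.1.eq, hBA.1.eq]
    have := A.invertibleOfIsUnitDet ((isUnit_iff_isUnit_det A).mp hA.isUnit)
    have := B.invertibleOfIsUnitDet ((isUnit_iff_isUnit_det B).mp hB.isUnit)
    rw [← invOf_eq_nonsing_inv A, ← invOf_eq_nonsing_inv B]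
    simp only [Matrix.mul_sub, Matrix.sub_mul, Matrix.mul_add, Matrix.add_mul, Matrix.mul_assoc,
      invOf_mul_self, Matrix.mul_one, Matrix.one_mul, mul_invOf_self, invOf_mul_cancel_left]
    abel
  rw [key]
  refine PosDef.conjTranspose_mul_mul_same ?_ (mulVec_injective_of_isUnit hB.inv.isUnit)
  exact (hA.inv.conjTranspose_mul_mul_same (mulVec_injective_of_isUnit hBA.isUnit)).add hBA

namespace cfracR

variable {p : ℕ} {s : ℝ} {γ γh : ℕ → Matrix (Fin p) (Fin p) ℝ}

theorem posDef (hγ : ∀ i, (γ i).PosDef) (hγh : ∀ i, (γh i).PosDef) (hs : 0 < s) :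
    ∀ k i, (cfracR s γ γh i (k + 1)).PosDef
  | 0, i => ((hγh i).smul hs).inv
  | k + 1, i => (((hγh i).smul hs).add ((hγ i).add (posDef hγ hγh hs k (i + 1))).inv).inv

theorem sub_succ_posDef (hγ : ∀ i, (γ i).PosDef) (hγh : ∀ i, (γh i).PosDef) (hs : 0 < s) :
    ∀ k i, (cfracR s γ γh i (k + 1) - cfracR s γ γh i (k + 2)).PosDef
  | 0, i => by
    refine PosDef.inv_sub_inv_s7 ((hγh i).smul hs) ?_
    simpa only [cfracR, add_sub_cancel_left] using ((hγ i).add (posDef hγ hγh hs 0 (i + 1))).inv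
  | k + 1, i => by
    have hfloor := ((hγ i).add (posDef hγ hγh hs (k + 1) (i + 1))).inv_sub_inv_s7
      (B := γ i + cfracR s γ γh (i + 1) (k + 1)) (by simpa only [add_sub_add_left_eq_sub] using sub_succ_posDef hγ hγh hs k (i + 1))
    refine PosDef.inv_sub_inv_s7
      (((hγh i).smul hs).add ((hγ i).add (posDef hγ hγh hs k (i + 1))).inv) ?_
    simpa only [add_sub_add_left_eq_sub] using hfloor

end cfracR

/-- For fixed `s > 0`, the sequence of Gauss-Radau continued fractions `m ↦ F̃_m(s)` is
strictly decreasing in the Loewner order: `F̃_{m+1}(s) < F̃_m(s)`. -/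
theorem stmt_7 (p : ℕ) (γ γh : ℕ → Matrix (Fin p) (Fin p) ℝ)
    (hγ : ∀ i, (γ i).PosDef) (hγh : ∀ i, (γh i).PosDef) (s : ℝ) (hs : 0 < s) :
    ∀ m : ℕ, 1 ≤ m → (cfracR s γ γh 1 m - cfracR s γ γh 1 (m + 1)).PosDef := by
  intro m hm
  obtain ⟨k, rfl⟩ := Nat.exists_eq_add_of_le' hm
  exact cfracR.sub_succ_posDef hγ hγh hs k 1
end

section
/- With F_m(s) and F̃_m(s) the Gauss and Gauss-Radau continued fractions of depth m built from the same symmetric positive definite matrices γ_i, γ̂_i (F_m terminates with C_{m+1} = 0, F̃_m omits the last floor γ_m), for every s > 0 one has F_m(s) ≤ F̃_m(s) in the Loewner order. -/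
/-!
Matrix inversion is antitone in the Loewner order on positive definite matrices: with
`D = B - A ≥ 0` one has `A⁻¹ - B⁻¹ = B⁻¹ (D + D A⁻¹ D) B⁻¹`, a congruence of a positive
semidefinite matrix. Hence every floor `X ↦ (s γ̂ + (γ + X)⁻¹)⁻¹` is monotone on `X ≥ 0`, and the
two fractions differ only in the deepest floor, where `(s γ̂ + γ⁻¹)⁻¹ ≤ (s γ̂)⁻¹`.
-/

open Matrix

open scoped MatrixOrder ComplexOrder

namespace Matrix

variable {𝕜 n : Type*} [RCLike 𝕜] [Fintype n] [DecidableEq n] {A B G X Y : Matrix n n 𝕜}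

theorem inv_sub_inv_eq_of_isUnit (hA : IsUnit A) (hB : IsUnit B) :
    A⁻¹ - B⁻¹ = B⁻¹ * ((B - A) + (B - A) * A⁻¹ * (B - A)) * B⁻¹ := by
  rw [isUnit_iff_isUnit_det] at hA hB
  simp only [mul_add, add_mul, mul_sub, sub_mul, Matrix.mul_assoc, mul_nonsing_inv _ hA,
    mul_nonsing_inv _ hB, nonsing_inv_mul _ hB, nonsing_inv_mul_cancel_left _ _ hA,
    nonsing_inv_mul_cancel_left _ _ hB, Matrix.mul_one, Matrix.one_mul]
  abel

theorem PosDef.inv_anti (hA : A.PosDef) (hAB : A ≤ B) : B⁻¹ ≤ A⁻¹ := by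
  have hD : (B - A).PosSemidef := le_iff.mp hAB
  have hB : B.PosDef := by simpa using hA.add_posSemidef hD
  rw [le_iff, inv_sub_inv_eq_of_isUnit hA.isUnit hB.isUnit]
  have hE : (B - A + (B - A)ᴴ * A⁻¹ * (B - A)).PosSemidef :=
    hD.add (hA.inv.posSemidef.conjTranspose_mul_mul_same (B - A))
  simpa [hB.inv.isHermitian.eq, hD.isHermitian.eq, Matrix.mul_assoc] using
    hE.conjTranspose_mul_mul_same B⁻¹

theorem PosDef.inv_add_inv_add (hA : A.PosDef) (hG : G.PosDef) (hX : 0 ≤ X) :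
    (A + (G + X)⁻¹)⁻¹.PosDef :=
  (hA.add_posSemidef (hG.add_posSemidef hX.posSemidef).inv.posSemidef).inv

theorem PosDef.inv_add_inv_add_le (hA : A.PosDef) (hG : G.PosDef) (hX : 0 ≤ X) (hXY : X ≤ Y) :
    (A + (G + X)⁻¹)⁻¹ ≤ (A + (G + Y)⁻¹)⁻¹ := by
  have hGY : (G + Y).PosDef := hG.add_posSemidef (hX.trans hXY).posSemidef
  refine (hA.add_posSemidef hGY.inv.posSemidef).inv_anti ?_
  gcongr
  exact (hG.add_posSemidef hX.posSemidef).inv_anti (by gcongr)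

end Matrix

section ContinuedFraction

variable {p : ℕ} {γ γh : ℕ → Matrix (Fin p) (Fin p) ℝ} {s : ℝ}

theorem cfrac_nonneg (hγ : ∀ i, (γ i).PosDef) (hγh : ∀ i, (γh i).PosDef) (hs : 0 < s) :
    ∀ i k, 0 ≤ cfrac s γ γh i k
  | _, 0 => le_rfl
  | i, k + 1 =>
    (((hγh i).smul hs).inv_add_inv_add (hγ i) (cfrac_nonneg hγ hγh hs (i + 1) k)).posSemidef.nonneg

theorem cfrac_le_cfracR (hγ : ∀ i, (γ i).PosDef) (hγh : ∀ i, (γh i).PosDef) (hs : 0 < s) :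
    ∀ i k, cfrac s γ γh i k ≤ cfracR s γ γh i k
  | _, 0 => le_rfl
  | i, 1 => by
    simp only [cfrac, cfracR, add_zero]
    exact ((hγh i).smul hs).inv_anti (le_add_of_nonneg_right (hγ i).inv.posSemidef.nonneg)
  | i, k + 2 =>
    ((hγh i).smul hs).inv_add_inv_add_le (hγ i) (cfrac_nonneg hγ hγh hs (i + 1) (k + 1))
      (cfrac_le_cfracR hγ hγh hs (i + 1) (k + 1))

end ContinuedFraction

theorem stmt_8_general (p : ℕ) (γ γh : ℕ → Matrix (Fin p) (Fin p) ℝ)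
    (hγ : ∀ i, (γ i).PosDef) (hγh : ∀ i, (γh i).PosDef) (s : ℝ) (hs : 0 < s)
    (m : ℕ) :
    (cfracR s γ γh 1 m - cfrac s γ γh 1 m).PosSemidef :=
  le_iff.mp (cfrac_le_cfracR hγ hγh hs 1 m)

/-- For every `s > 0`, the Gauss and Gauss-Radau continued fractions of the same depth `m`
built from the same symmetric positive definite data satisfy `F_m(s) ≤ F̃_m(s)` in the
Loewner order. -/
theorem stmt_8 (p : ℕ) (γ γh : ℕ → Matrix (Fin p) (Fin p) ℝ)
    (hγ : ∀ i, (γ i).PosDef) (hγh : ∀ i, (γh i).PosDef) (s : ℝ) (hs : 0 < s)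
    (m : ℕ) (hm : 1 ≤ m) :
    (cfracR s γ γh 1 m - cfrac s γ γh 1 m).PosSemidef :=
  stmt_8_general p γ γh hγ hγh s hs m
end

section
/- Let F̃_m(s) be the Gauss-Radau continued fraction of depth m, where the recursion C_i(s) = (s γ̂_i + (γ_i + C_{i+1}(s))^{-1})^{-1} terminates with C_m(s) = (s γ̂_m)^{-1}, all γ_i, γ̂_i symmetric positive definite p×p matrices. Then lim_{s→0⁺} s·F̃_m(s) = (γ̂₁ + γ̂₂ + … + γ̂_m)^{-1}; in particular F̃_m has a simple pole at s = 0 with residue of rank p. -/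
/-!
Multiplying the recursion by `s` gives `s C_i(s) = (γ̂_i + (s γ_i + s C_{i+1}(s))⁻¹)⁻¹`. By
induction from the bottom floor, `s C_{i+1}(s) → (γ̂_{i+1} + ⋯ + γ̂_m)⁻¹`, an invertible matrix
since sums of positive definite matrices are positive definite. Hence `s γ_i` drops out in the
limit, and continuity of matrix inversion at invertible matrices gives
`s C_i(s) → (γ̂_i + ⋯ + γ̂_m)⁻¹`.
-/

open Matrix Filter

theorem Matrix.smul_inv₀ {n 𝕜 : Type*} [Fintype n] [DecidableEq n] [Field 𝕜] {k : 𝕜}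
    (hk : k ≠ 0) (A : Matrix n n 𝕜) : (k • A)⁻¹ = k⁻¹ • A⁻¹ := by
  by_cases hA : IsUnit A.det
  · exact inv_smul' A (Units.mk0 k hk) hA
  · have hkA : ¬IsUnit (k • A).det := by
      rw [det_smul]
      exact fun h => hA (isUnit_of_mul_isUnit_right h)
    rw [nonsing_inv_apply_not_isUnit A hA, nonsing_inv_apply_not_isUnit _ hkA, smul_zero]

theorem Filter.Tendsto.matrix_inv {α n 𝕜 : Type*} [Fintype n] [DecidableEq n] [Field 𝕜]
    [TopologicalSpace 𝕜] [IsTopologicalRing 𝕜] [ContinuousInv₀ 𝕜] {l : Filter α}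
    {f : α → Matrix n n 𝕜} {A : Matrix n n 𝕜} (hf : Tendsto f l (nhds A)) (hA : IsUnit A) :
    Tendsto (fun x => (f x)⁻¹) l (nhds A⁻¹) := by
  refine (continuousAt_matrix_inv A ?_).tendsto.comp hf
  rw [Ring.inverse_eq_inv']
  exact continuousAt_inv₀ ((isUnit_iff_isUnit_det A).1 hA).ne_zero

theorem Matrix.posDef_sum_range_succ {n R : Type*} [Fintype n] [Ring R] [PartialOrder R]
    [StarRing R] [AddLeftMono R] {f : ℕ → Matrix n n R} {k : ℕ} (hf : ∀ j ≤ k, (f j).PosDef) :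
    (∑ j ∈ Finset.range (k + 1), f j).PosDef := by
  induction k with
  | zero => simpa using hf 0 le_rfl
  | succ k ih =>
    rw [Finset.sum_range_succ]
    exact (ih fun j hj => hf j (by omega)).add (hf (k + 1) le_rfl)

section cfracR

variable {p : ℕ} {s : ℝ} (γ γh : ℕ → Matrix (Fin p) (Fin p) ℝ)

theorem smul_cfracR_one (hs : s ≠ 0) (i : ℕ) : s • cfracR s γ γh i 1 = (γh i)⁻¹ := by
  rw [cfracR, Matrix.smul_inv₀ hs, smul_inv_smul₀ hs]

theorem smul_cfracR_add_two (hs : s ≠ 0) (i n : ℕ) :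
    s • cfracR s γ γh i (n + 2) =
      (γh i + (s • γ i + s • cfracR s γ γh (i + 1) (n + 1))⁻¹)⁻¹ := by
  have smul_inv_eq (X : Matrix (Fin p) (Fin p) ℝ) : s • X⁻¹ = (s⁻¹ • X)⁻¹ := by
    rw [Matrix.smul_inv₀ (inv_ne_zero hs), inv_inv]
  rw [cfracR, smul_inv_eq, smul_add, inv_smul_smul₀ hs, ← smul_add, Matrix.smul_inv₀ hs]

theorem tendsto_smul_cfracR (n i : ℕ) (hγh : ∀ j ≤ n, (γh (j + i)).PosDef) :
    Tendsto (fun s : ℝ => s • cfracR s γ γh i (n + 1)) (nhdsWithin 0 (Set.Ioi 0))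
      (nhds (∑ j ∈ Finset.range (n + 1), γh (j + i))⁻¹) := by
  induction n generalizing i with
  | zero =>
    simp only [Finset.sum_range_one, zero_add]
    refine tendsto_const_nhds.congr' ?_
    filter_upwards [self_mem_nhdsWithin] with s hs
    exact (smul_cfracR_one γ γh hs.ne' i).symm
  | succ n ih =>
    set S := ∑ j ∈ Finset.range (n + 1), γh (j + (i + 1))
    have htail : ∀ j ≤ n, (γh (j + (i + 1))).PosDef := fun j hj => by
      simpa only [add_right_comm, add_assoc] using hγh (j + 1) (by omega)
    have hS : S.PosDef := posDef_sum_range_succ htail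
    have hhead : (γh i + S).PosDef := by simpa only [zero_add] using (hγh 0 (by omega)).add hS
    have hsum : γh i + S = ∑ j ∈ Finset.range (n + 2), γh (j + i) := by
      rw [Finset.sum_range_succ' _ (n + 1), zero_add, add_comm]
      simp only [S, add_right_comm _ 1 i, add_assoc]
    have hγ : Tendsto (fun s : ℝ => s • γ i) (nhdsWithin 0 (Set.Ioi 0)) (nhds 0) := by
      simpa using ((tendsto_id (x := nhds (0 : ℝ))).smul_const (γ i)).mono_left nhdsWithin_le_nhds
    have hinner := (hγ.add (ih (i + 1) htail)).matrix_inv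
      (by simpa only [zero_add] using hS.inv.isUnit)
    rw [zero_add, nonsing_inv_nonsing_inv _ ((isUnit_iff_isUnit_det S).1 hS.isUnit)] at hinner
    rw [← hsum]
    refine ((hinner.const_add (γh i)).matrix_inv hhead.isUnit).congr' ?_
    filter_upwards [self_mem_nhdsWithin] with s hs
    exact (smul_cfracR_add_two γ γh hs.ne' i n).symm

end cfracR

theorem stmt_10_general (p : ℕ) (γ γh : ℕ → Matrix (Fin p) (Fin p) ℝ) (m : ℕ) (hm : 1 ≤ m)
    (hγh : ∀ i, 1 ≤ i → i ≤ m → (γh i).PosDef) :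
    Tendsto (fun s : ℝ => s • cfracR s γ γh 1 m)
        (nhdsWithin 0 (Set.Ioi 0))
        (nhds (∑ i ∈ Finset.range m, γh (i + 1))⁻¹) ∧
      ((∑ i ∈ Finset.range m, γh (i + 1))⁻¹ : Matrix (Fin p) (Fin p) ℝ).rank = p := by
  obtain ⟨n, rfl⟩ : ∃ n, m = n + 1 := ⟨m - 1, by omega⟩
  have hγh' : ∀ j ≤ n, (γh (j + 1)).PosDef := fun j hj => hγh (j + 1) (by omega) (by omega)
  refine ⟨tendsto_smul_cfracR γ γh n 1 hγh', ?_⟩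
  rw [rank_of_isUnit _ (posDef_sum_range_succ hγh').inv.isUnit, Fintype.card_fin]

/-- `lim_{s → 0⁺} s · F̃_m(s) = (γ̂₁ + ⋯ + γ̂_m)⁻¹`; in particular the Gauss-Radau continued
fraction has a simple pole at `s = 0` whose residue has full rank `p`. -/
theorem stmt_10 (p : ℕ) (γ γh : ℕ → Matrix (Fin p) (Fin p) ℝ) (m : ℕ) (hm : 1 ≤ m)
    (hγ : ∀ i, 1 ≤ i → i + 1 ≤ m → (γ i).PosDef)
    (hγh : ∀ i, 1 ≤ i → i ≤ m → (γh i).PosDef) :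
    Tendsto (fun s : ℝ => s • cfracR s γ γh 1 m)
        (nhdsWithin 0 (Set.Ioi 0))
        (nhds (∑ i ∈ Finset.range m, γh (i + 1))⁻¹) ∧
      ((∑ i ∈ Finset.range m, γh (i + 1))⁻¹ : Matrix (Fin p) (Fin p) ℝ).rank = p :=
  stmt_10_general p γ γh m hm hγh
end

section
/- Let T_m ∈ ℝ^{m×m} be the symmetric tridiagonal Jacobi matrix produced by m steps of the Lanczos algorithm applied to a symmetric positive definite A ∈ ℝ^{n×n} and unit vector b (so A Q_m = Q_m T_m + β_{m+1} q_{m+1} e_m^T with Q_m^T Q_m = I, Q_m e₁ = b). Then for every s > 0, e₁^T (T_m + sI)^{-1} e₁ ≤ b^T (A + sI)^{-1} b. -/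
/-!
`x ↦ 2 x ⬝ v - x ⬝ M x` is maximised over `ℝⁿ` at `x = M⁻¹ v`, with maximum `v ⬝ M⁻¹ v`.
Restricting `x` to the range of `Q` gives `(Qᵀ v) ⬝ (Qᵀ M Q)⁻¹ (Qᵀ v)`, which therefore cannot
exceed `v ⬝ M⁻¹ v`. With `M = A + sI`, `Qᵀ M Q = T + sI` and `Qᵀ b = e₁` this is the theorem.
-/

open Matrix

namespace Matrix

variable {ι κ : Type*} [Fintype ι] [Fintype κ]

theorem mulVec_dotProduct_eq_dotProduct_transpose_mulVec {R : Type*} [CommSemiring R]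
    (Q : Matrix ι κ R) (y : κ → R) (w : ι → R) : (Q *ᵥ y) ⬝ᵥ w = y ⬝ᵥ (Qᵀ *ᵥ w) := by
  rw [mulVec_transpose, dotProduct_comm, dotProduct_mulVec, dotProduct_comm]

theorem PosDef.two_mul_dotProduct_sub_le_dotProduct_inv_mulVec [DecidableEq ι]
    {M : Matrix ι ι ℝ} (hM : M.PosDef) (v x : ι → ℝ) :
    2 * (x ⬝ᵥ v) - x ⬝ᵥ (M *ᵥ x) ≤ v ⬝ᵥ (M⁻¹ *ᵥ v) := by
  set u := M⁻¹ *ᵥ v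
  have hMu : M *ᵥ u = v := by
    rw [mulVec_mulVec, mul_nonsing_inv M hM.det_pos.ne'.isUnit, one_mulVec]
  have hxMu : x ⬝ᵥ (M *ᵥ u) = u ⬝ᵥ (M *ᵥ x) := by
    calc x ⬝ᵥ (M *ᵥ u) = x ⬝ᵥ (Mᵀ *ᵥ u) := by
          rw [← conjTranspose_eq_transpose_of_trivial, hM.isHermitian.eq]
      _ = (M *ᵥ x) ⬝ᵥ u := (mulVec_dotProduct_eq_dotProduct_transpose_mulVec M x u).symm
      _ = u ⬝ᵥ (M *ᵥ x) := dotProduct_comm _ _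
  have hnonneg : 0 ≤ (u - x) ⬝ᵥ (M *ᵥ (u - x)) := by
    simpa using hM.posSemidef.dotProduct_mulVec_nonneg (u - x)
  simp only [mulVec_sub, sub_dotProduct, dotProduct_sub] at hnonneg
  rw [hMu, ← hxMu, hMu] at hnonneg
  rw [dotProduct_comm v u]
  linarith

theorem PosDef.compression_dotProduct_inv_mulVec_le [DecidableEq ι] [DecidableEq κ]
    {M : Matrix ι ι ℝ} (hM : M.PosDef) (Q : Matrix ι κ ℝ) (v : ι → ℝ) :
    (Qᵀ *ᵥ v) ⬝ᵥ ((Qᵀ * M * Q)⁻¹ *ᵥ (Qᵀ *ᵥ v)) ≤ v ⬝ᵥ (M⁻¹ *ᵥ v) := by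
  set N := Qᵀ * M * Q
  set w := Qᵀ *ᵥ v
  by_cases hN : IsUnit N.det
  · set y := N⁻¹ *ᵥ w
    have hNy : N *ᵥ y = w := by rw [mulVec_mulVec, mul_nonsing_inv N hN, one_mulVec]
    have hxv : (Q *ᵥ y) ⬝ᵥ v = y ⬝ᵥ w :=
      mulVec_dotProduct_eq_dotProduct_transpose_mulVec Q y v
    have hxMx : (Q *ᵥ y) ⬝ᵥ (M *ᵥ (Q *ᵥ y)) = y ⬝ᵥ w := by
      rw [mulVec_dotProduct_eq_dotProduct_transpose_mulVec, mulVec_mulVec, mulVec_mulVec, hNy]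
    have hvariational := hM.two_mul_dotProduct_sub_le_dotProduct_inv_mulVec v (Q *ᵥ y)
    rw [hxv, hxMx] at hvariational
    rw [dotProduct_comm]
    linarith
  · -- `N⁻¹ = 0` is a junk value; the right side is still nonnegative
    simpa [nonsing_inv_apply_not_isUnit N hN] using
      hM.two_mul_dotProduct_sub_le_dotProduct_inv_mulVec v 0

end Matrix

theorem stmt_12_general (n m : ℕ) (hm : 0 < m)
    (A : Matrix (Fin n) (Fin n) ℝ) (hA : A.PosDef)
    (b : Fin n → ℝ)
    (Q : Matrix (Fin n) (Fin m) ℝ) (hQ : Qᵀ * Q = 1)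
    (hQ1 : (fun i => Q i ⟨0, hm⟩) = b)
    (T : Matrix (Fin m) (Fin m) ℝ) (hT : T = Qᵀ * A * Q)
    (e₁ : Fin m → ℝ) (he₁ : e₁ = fun j : Fin m => if (j : ℕ) = 0 then (1 : ℝ) else 0)
    (s : ℝ) (hs : 0 < s) :
    e₁ ⬝ᵥ ((T + s • (1 : Matrix (Fin m) (Fin m) ℝ))⁻¹ *ᵥ e₁)
      ≤ b ⬝ᵥ ((A + s • (1 : Matrix (Fin n) (Fin n) ℝ))⁻¹ *ᵥ b) := by
  have hM : (A + s • (1 : Matrix (Fin n) (Fin n) ℝ)).PosDef :=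
    hA.add_posSemidef (PosSemidef.one.smul hs.le)
  have hN : Qᵀ * (A + s • (1 : Matrix (Fin n) (Fin n) ℝ)) * Q = T + s • 1 := by
    rw [hT, Matrix.mul_add, Matrix.add_mul, Matrix.mul_smul, Matrix.smul_mul, Matrix.mul_one, hQ]
  have he : Qᵀ *ᵥ b = e₁ := by
    have hb : b = Q *ᵥ Pi.single ⟨0, hm⟩ 1 := by rw [← hQ1, mulVec_single_one]; rfl
    ext j
    rw [hb, mulVec_mulVec, hQ, one_mulVec, he₁, Pi.single_apply]
    simp only [Fin.ext_iff]
  simpa only [hN, he] using hM.compression_dotProduct_inv_mulVec_le Q b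

/-- Gauss quadrature lower bound: if `Q` has orthonormal columns spanning the Krylov space
`span{b, Ab, …, A^{m-1}b}` with first column the unit vector `b`, and `T = Qᵀ A Q` is the
Lanczos Jacobi matrix, then for every `s > 0`,
`e₁ᵀ (T + sI)⁻¹ e₁ ≤ bᵀ (A + sI)⁻¹ b`. -/
theorem stmt_12 (n m : ℕ) (hm : 0 < m)
    (A : Matrix (Fin n) (Fin n) ℝ) (hA : A.PosDef)
    (b : Fin n → ℝ) (hb : b ⬝ᵥ b = 1)
    (Q : Matrix (Fin n) (Fin m) ℝ) (hQ : Qᵀ * Q = 1)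
    (hQ1 : (fun i => Q i ⟨0, hm⟩) = b)
    (hspan : Submodule.span ℝ (Set.range fun j : Fin m => Qᵀ j)
           = Submodule.span ℝ (Set.range fun k : Fin m => (A ^ (k : ℕ)) *ᵥ b))
    (T : Matrix (Fin m) (Fin m) ℝ) (hT : T = Qᵀ * A * Q)
    (e₁ : Fin m → ℝ) (he₁ : e₁ = fun j : Fin m => if (j : ℕ) = 0 then (1 : ℝ) else 0)
    (s : ℝ) (hs : 0 < s) :
    e₁ ⬝ᵥ ((T + s • (1 : Matrix (Fin m) (Fin m) ℝ))⁻¹ *ᵥ e₁)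
      ≤ b ⬝ᵥ ((A + s • (1 : Matrix (Fin n) (Fin n) ℝ))⁻¹ *ᵥ b) :=
  stmt_12_general n m hm A hA b Q hQ hQ1 T hT e₁ he₁ s hs
end
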